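/- Let P be a normal logic program and 𝔄_P = (A_P, Att_P) its associated SETAF. Then a labelling L is a preferred labelling of 𝔄_P if and only if L2I_P(L) is a regular model of P. -/

import Mathlib

/-- A rule of a normal logic program:
`head ← bodyPos, not bodyNeg`. -/
structure Rule (α : Type) where
  head : α
  bodyPos : Finset α
  bodyNeg : Finset α
deriving DecidableEq

/-- A normal logic program (NLP): a finite set of rules. -/
abbrev NLP (α : Type) := Finset (Rule α)

variable {α : Type} [DecidableEq α]

/-- The atoms occurring in a rule. -/
def Rule.atoms (r : Rule α) : Finset α :=
  insert r.head (r.bodyPos ∪ r.bodyNeg)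

/-- The Herbrand base of a program: all atoms occurring in it. -/
def HB (P : NLP α) : Finset α := P.sup Rule.atoms

/-- A three-valued interpretation, given by its sets of true and false atoms. -/
structure Interp (α : Type) where
  T : Set α
  F : Set α

/-- `I` is a 3-valued interpretation over the Herbrand base `H`. -/
def IsInterp (H : Finset α) (I : Interp α) : Prop :=
  I.T ⊆ ↑H ∧ I.F ⊆ ↑H ∧ Disjoint I.T I.F

/-- A rule of a positive program obtained as a reduct; `hasU` records whether
the special atom `u` (undefined in every interpretation) occurs in its body. -/
structure PosRule (α : Type) where
  head : α
  bodyPos : Finset α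
  hasU : Prop

/-- The reduct `P/I`: delete every rule whose negative body meets `I.T`,
delete each `not b` with `b ∈ I.F`, and replace the remaining negative
literals by the special atom `u`. -/
def reduct (P : NLP α) (I : Interp α) : Set (PosRule α) :=
  { q | ∃ r ∈ P, (∀ b ∈ r.bodyNeg, b ∉ I.T) ∧
        q.head = r.head ∧ q.bodyPos = r.bodyPos ∧
        (q.hasU ↔ ∃ b ∈ r.bodyNeg, b ∉ I.F) }

/-- The `Ψ` operator of a positive program `Q` relative to the Herbrand base
`H`; the special atom `u` is neither true nor false in any interpretation. -/
def PsiOp (H : Finset α) (Q : Set (PosRule α)) (J : Interp α) : Interp α where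
  T := { c | c ∈ H ∧ ∃ q ∈ Q, q.head = c ∧ ¬ q.hasU ∧ ∀ a ∈ q.bodyPos, a ∈ J.T }
  F := { c | c ∈ H ∧ ∀ q ∈ Q, q.head = c → ∃ a ∈ q.bodyPos, a ∈ J.F }

/-- Iteration of `Ψ` starting from `⟨∅, H⟩`. -/
def PsiIter (H : Finset α) (Q : Set (PosRule α)) : ℕ → Interp α
  | 0 => ⟨∅, ↑H⟩
  | n + 1 => PsiOp H Q (PsiIter H Q n)

/-- `Ω_P(I)`: the least three-valued model of the reduct `P/I`,
obtained as the `ω`-iteration of `Ψ`. -/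
def OmegaOp (H : Finset α) (P : NLP α) (I : Interp α) : Interp α where
  T := ⋃ n, (PsiIter H (reduct P I) n).T
  F := ⋂ n, (PsiIter H (reduct P I) n).F

/-- `I` is a partial stable model of `P` (over Herbrand base `H`). -/
def IsPSModel (H : Finset α) (P : NLP α) (I : Interp α) : Prop :=
  IsInterp H I ∧ OmegaOp H P I = I

/-- Well-founded model: a partial stable model with `⊆`-minimal true part. -/
def IsWFModel (H : Finset α) (P : NLP α) (I : Interp α) : Prop :=
  IsPSModel H P I ∧ ∀ J, IsPSModel H P J → ¬ J.T ⊂ I.T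

/-- Regular model: a partial stable model with `⊆`-maximal true part. -/
def IsRegularModel (H : Finset α) (P : NLP α) (I : Interp α) : Prop :=
  IsPSModel H P I ∧ ∀ J, IsPSModel H P J → ¬ I.T ⊂ J.T

/-- Stable model: a partial stable model with `T ∪ F = H`. -/
def IsStableModel (H : Finset α) (P : NLP α) (I : Interp α) : Prop :=
  IsPSModel H P I ∧ I.T ∪ I.F = ↑H

/-- L-stable model: a partial stable model with `⊆`-maximal `T ∪ F`. -/
def IsLStableModel (H : Finset α) (P : NLP α) (I : Interp α) : Prop :=
  IsPSModel H P I ∧ ∀ J, IsPSModel H P J → ¬ (I.T ∪ I.F) ⊂ (J.T ∪ J.F)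

/-- `IsStatement P c V R`: there is a statement of `P` with conclusion `c`,
vulnerabilities `V` and rules `R`.  A statement is built from a rule
`r = c ← a₁,…,a_m, not b₁,…,not b_n ∈ P` together with statements `sᵢ` for the
positive body atoms `aᵢ` (with `r` not among their rules); its vulnerabilities
are `Vul(s₁) ∪ … ∪ Vul(s_m) ∪ {b₁,…,b_n}` and its rules are
`Rules(s₁) ∪ … ∪ Rules(s_m) ∪ {r}`. -/
inductive IsStatement (P : NLP α) : α → Finset α → Finset (Rule α) → Prop where
  | mk (r : Rule α) (hr : r ∈ P) (v : α → Finset α) (ρ : α → Finset (Rule α))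
      (hsub : ∀ a ∈ r.bodyPos, IsStatement P a (v a) (ρ a))
      (hnr : ∀ a ∈ r.bodyPos, r ∉ ρ a) :
      IsStatement P r.head (r.bodyPos.biUnion v ∪ r.bodyNeg)
        (insert r (r.bodyPos.biUnion ρ))

/-- `c` is an argument of `P`: it is the conclusion of some statement. -/
def IsArg (P : NLP α) (c : α) : Prop := ∃ V R, IsStatement P c V R

open Classical in
/-- The set `A_P` of arguments of `P`. -/
noncomputable def argsOf (P : NLP α) : Finset α := (HB P).filter (IsArg P)

/-- `B` meets every vulnerability set of `a` in `P`. -/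
def HitsVul (P : NLP α) (B : Finset α) (a : α) : Prop :=
  ∀ V R, IsStatement P a V R → ∃ b ∈ B, b ∈ V

/-- A SETAF: a finite set of arguments and an attack relation between
finite sets of arguments and arguments. -/
structure SETAF (α : Type) where
  args : Finset α
  att : Finset α → α → Prop

/-- Well-formedness of a SETAF: attackers are nonempty sets of arguments
attacking arguments, and attacking sets are `⊆`-minimal. -/
def SETAF.Wf (S : SETAF α) : Prop :=
  (∀ B a, S.att B a → B.Nonempty ∧ B ⊆ S.args ∧ a ∈ S.args) ∧
  (∀ B a, S.att B a → ∀ B', B' ⊂ B → ¬ S.att B' a)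

/-- The SETAF `𝔄_P` associated with an NLP `P`: its arguments are the
conclusions of the statements of `P`, and `B` attacks `a` iff `B` is a
`⊆`-minimal set of arguments meeting every vulnerability set of `a`. -/
noncomputable def setafOf (P : NLP α) : SETAF α where
  args := argsOf P
  att := fun B a =>
    B ⊆ argsOf P ∧ a ∈ argsOf P ∧ HitsVul P B a ∧ ∀ B', B' ⊂ B → ¬ HitsVul P B' a

/-- Labels for arguments. -/
inductive Lab : Type
  | inn | out | und
deriving DecidableEq

/-- `in(L)`. -/
def labIn (S : SETAF α) (L : α → Lab) : Set α := { a | a ∈ S.args ∧ L a = Lab.inn }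

/-- `out(L)`. -/
def labOut (S : SETAF α) (L : α → Lab) : Set α := { a | a ∈ S.args ∧ L a = Lab.out }

/-- `undec(L)`. -/
def labUnd (S : SETAF α) (L : α → Lab) : Set α := { a | a ∈ S.args ∧ L a = Lab.und }

/-- Admissible labelling. -/
def AdmissibleLab (S : SETAF α) (L : α → Lab) : Prop :=
  ∀ a ∈ S.args,
    (L a = Lab.inn → ∀ B, S.att B a → ∃ b ∈ B, L b = Lab.out) ∧
    (L a = Lab.out → ∃ B, S.att B a ∧ ∀ b ∈ B, L b = Lab.inn)

/-- Complete labelling. -/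
def CompleteLab (S : SETAF α) (L : α → Lab) : Prop :=
  AdmissibleLab S L ∧
  ∀ a ∈ S.args, L a = Lab.und →
    (∃ B, S.att B a ∧ ∀ b ∈ B, L b ≠ Lab.out) ∧
    (∀ B, S.att B a → ∃ b ∈ B, L b ≠ Lab.inn)

/-- Grounded labelling: complete with `⊆`-minimal `in(L)`. -/
def GroundedLab (S : SETAF α) (L : α → Lab) : Prop :=
  CompleteLab S L ∧ ∀ L', CompleteLab S L' → ¬ labIn S L' ⊂ labIn S L

/-- Preferred labelling: complete with `⊆`-maximal `in(L)`. -/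
def PreferredLab (S : SETAF α) (L : α → Lab) : Prop :=
  CompleteLab S L ∧ ∀ L', CompleteLab S L' → ¬ labIn S L ⊂ labIn S L'

/-- Stable labelling: complete with `undec(L) = ∅`. -/
def StableLab (S : SETAF α) (L : α → Lab) : Prop :=
  CompleteLab S L ∧ labUnd S L = ∅

/-- Semi-stable labelling: complete with `⊆`-minimal `undec(L)`. -/
def SemiStableLab (S : SETAF α) (L : α → Lab) : Prop :=
  CompleteLab S L ∧ ∀ L', CompleteLab S L' → ¬ labUnd S L' ⊂ labUnd S L

/-- `L2I_P`: the interpretation associated with a labelling of `𝔄_P`. -/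
def L2I (P : NLP α) (L : α → Lab) : Interp α where
  T := { c | c ∈ HB P ∧ c ∈ argsOf P ∧ L c = Lab.inn }
  F := { c | c ∈ HB P ∧ (c ∉ argsOf P ∨ (c ∈ argsOf P ∧ L c = Lab.out)) }

open Classical in
/-- `I2L`: the labelling associated with an interpretation (meaningful on
the arguments). -/
noncomputable def I2L (I : Interp α) : α → Lab := fun c =>
  if c ∈ I.T then Lab.inn else if c ∈ I.F then Lab.out else Lab.und

/-- `L2I_𝔄`: the interpretation `⟨in(L), out(L)⟩` associated with a labelling
of a SETAF `𝔄`. -/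
def L2Iset (S : SETAF α) (L : α → Lab) : Interp α := ⟨labIn S L, labOut S L⟩

/-- `V` meets every attacker of `a` in `S`. -/
def HitsAtt (S : SETAF α) (a : α) (V : Finset α) : Prop :=
  ∀ B, S.att B a → ∃ b ∈ B, b ∈ V

/-- `V ∈ V_a`: a `⊆`-minimal set of arguments meeting every attacker of `a`. -/
def MemVa (S : SETAF α) (a : α) (V : Finset α) : Prop :=
  V ⊆ S.args ∧ HitsAtt S a V ∧ ∀ V', V' ⊂ V → ¬ HitsAtt S a V'

open Classical in
/-- The NLP `P_𝔄` associated with a SETAF `𝔄`: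
`{ a ← not b₁,…,not b_n | a ∈ A, {b₁,…,b_n} ∈ V_a }`. -/
noncomputable def nlpOf (S : SETAF α) : NLP α :=
  ((S.args ×ˢ S.args.powerset).filter (fun p => MemVa S p.1 p.2)).image
    (fun p => { head := p.1, bodyPos := ∅, bodyNeg := p.2 })

/-- Redundancy-Free Atomic Logic Program: every rule is atomic (no positive
body), every atom is a head, and no rule's negative body strictly contains
that of another rule with the same head. -/
def IsRFALP (P : NLP α) : Prop :=
  (∀ r ∈ P, r.bodyPos = ∅) ∧
  HB P = P.image Rule.head ∧
  ∀ r ∈ P, ∀ r' ∈ P, r'.head = r.head → ¬ r'.bodyNeg ⊂ r.bodyNeg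

/-- Unfolding: replace a rule `c ← a, a₁,…,a_m, not b₁,…,not b_n` by all rules
obtained by resolving `a` against the rules of the program with head `a`. -/
def StepU (P₁ P₂ : NLP α) : Prop :=
  ∃ r ∈ P₁, ∃ a ∈ r.bodyPos,
    P₂ = P₁.erase r ∪
      (P₁.filter (fun r' => r'.head = a)).image
        (fun r' => { head := r.head,
                     bodyPos := r'.bodyPos ∪ r.bodyPos.erase a,
                     bodyNeg := r'.bodyNeg ∪ r.bodyNeg })

/-- Elimination of tautologies: delete a rule whose head occurs in its
positive body. -/
def StepT (P₁ P₂ : NLP α) : Prop :=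
  ∃ r ∈ P₁, r.head ∈ r.bodyPos ∧ P₂ = P₁.erase r

/-- Positive reduction: delete a literal `not b` from the body of a rule,
where `b` is not the head of any rule of the program. -/
def StepP (P₁ P₂ : NLP α) : Prop :=
  ∃ r ∈ P₁, ∃ b ∈ r.bodyNeg, (∀ r' ∈ P₁, r'.head ≠ b) ∧
    P₂ = insert { head := r.head, bodyPos := r.bodyPos,
                  bodyNeg := r.bodyNeg.erase b } (P₁.erase r)

/-- Elimination of non-minimal rules: delete a rule subsumed by a distinct
rule with the same head and smaller bodies. -/
def StepM (P₁ P₂ : NLP α) : Prop :=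
  ∃ r ∈ P₁, ∃ r' ∈ P₁, r ≠ r' ∧ r'.head = r.head ∧
    r'.bodyPos ⊆ r.bodyPos ∧ r'.bodyNeg ⊆ r.bodyNeg ∧ P₂ = P₁.erase r

/-- `↦_UTPM`: the union of the four transformations. -/
def StepUTPM (P₁ P₂ : NLP α) : Prop :=
  StepU P₁ P₂ ∨ StepT P₁ P₂ ∨ StepP P₁ P₂ ∨ StepM P₁ P₂

/-- `P` is irreducible w.r.t. `↦_UTPM`: there is no `P' ≠ P` with
`P ↦_UTPM P'`. -/
def UTPMIrreducible (P : NLP α) : Prop :=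
  ¬ ∃ P', StepUTPM P P' ∧ P' ≠ P

/-! Both sides are described through the statements of `P`. For a 3-valued interpretation `I`,
an atom is true in `Ω_P(I)` iff some statement for it has all its vulnerabilities false in `I`,
and false iff every statement for it has a vulnerability true in `I`. In `𝔄_P`, an argument `a`
has an attacker inside a set `X` of arguments iff `X` meets every vulnerability set of `a`; so the
conditions of a complete labelling `L` say the same about `in(L)` and `out(L)`, and `L` is
complete iff `L2I_P(L)` is a partial stable model. As `L2I_P` is a bijection onto the partial
stable models (inverse `I2L`) carrying `in(L)` to the true part, maximising one maximises the
other. -/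

section

open Filter

attribute [ext] Interp

/-- `¬ Supported P Xᶜ c` says that every statement for `c` has a vulnerability in `X`. -/
def Supported (P : NLP α) (X : Set α) (c : α) : Prop :=
  ∃ V R, IsStatement P c V R ∧ ↑V ⊆ X

variable {P : NLP α}

lemma Rule.atoms_subset_HB {r : Rule α} (hr : r ∈ P) : r.atoms ⊆ HB P :=
  Finset.le_sup (f := Rule.atoms) hr

lemma argsOf_subset_HB : argsOf P ⊆ HB P := by
  classical
  exact Finset.filter_subset _ _

namespace IsStatement

variable {c : α} {V : Finset α} {R : Finset (Rule α)}

lemma conc_mem_HB (h : IsStatement P c V R) : c ∈ HB P := by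
  cases h with
  | mk r hr _ _ _ _ => exact Rule.atoms_subset_HB hr (Finset.mem_insert_self _ _)

lemma mem_argsOf (h : IsStatement P c V R) : c ∈ argsOf P := by
  classical
  exact Finset.mem_filter.2 ⟨h.conc_mem_HB, _, _, h⟩

lemma vul_subset_HB (h : IsStatement P c V R) : ↑V ⊆ (HB P : Set α) := by
  induction h with
  | mk r hr v ρ _ _ ih =>
    intro b hb
    simp only [Finset.coe_union, Finset.coe_biUnion, Set.mem_union, Set.mem_iUnion] at hb
    obtain ⟨a, ha, hb⟩ | hb := hb
    · exact ih a ha hb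
    · exact Rule.atoms_subset_HB hr (by simp [Rule.atoms, Finset.mem_coe.1 hb])

lemma exists_of_mem_rules (h : IsStatement P c V R) {r : Rule α} (hr : r ∈ R) :
    ∃ V' R', V' ⊆ V ∧ IsStatement P r.head V' R' := by
  induction h with
  | mk r₀ hr₀ v ρ hsub hnr ih =>
    rcases Finset.mem_insert.1 hr with rfl | hr
    · exact ⟨_, _, subset_rfl, .mk _ hr₀ v ρ hsub hnr⟩
    · obtain ⟨a, ha, hra⟩ := Finset.mem_biUnion.1 hr
      obtain ⟨V', R', hV', hst⟩ := ih a ha hra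
      exact ⟨V', R', hV'.trans ((Finset.subset_biUnion_of_mem v ha).trans
        Finset.subset_union_left), hst⟩

end IsStatement

namespace Supported

variable {X Y : Set α} {c : α}

lemma mem_argsOf (h : Supported P X c) : c ∈ argsOf P :=
  let ⟨_, _, hst, _⟩ := h; hst.mem_argsOf

lemma mono (h : Supported P X c) (hXY : X ⊆ Y) : Supported P Y c :=
  let ⟨V, R, hst, hV⟩ := h; ⟨V, R, hst, hV.trans hXY⟩

lemma inter_HB_iff : Supported P (X ∩ HB P) c ↔ Supported P X c :=
  ⟨fun h => h.mono Set.inter_subset_left,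
    fun ⟨V, R, hst, hV⟩ => ⟨V, R, hst, Set.subset_inter hV hst.vul_subset_HB⟩⟩

/-- A statement may not reuse its own rule; but if a chosen sub-statement for the body of `r`
uses `r`, it already contains a statement for `r.head`. -/
lemma of_rule {r : Rule α} (hr : r ∈ P) (hpos : ∀ a ∈ r.bodyPos, Supported P X a)
    (hneg : ↑r.bodyNeg ⊆ X) : Supported P X r.head := by
  classical
  have hchoice : ∀ a, ∃ V R, a ∈ r.bodyPos → IsStatement P a V R ∧ ↑V ⊆ X := fun a => by
    by_cases ha : a ∈ r.bodyPos
    · obtain ⟨V, R, h⟩ := hpos a ha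
      exact ⟨V, R, fun _ => h⟩
    · exact ⟨∅, ∅, fun h => absurd h ha⟩
  choose v ρ hvρ using hchoice
  by_cases hcyc : ∃ a ∈ r.bodyPos, r ∈ ρ a
  · obtain ⟨a, ha, hra⟩ := hcyc
    obtain ⟨V', R', hV', hst⟩ := (hvρ a ha).1.exists_of_mem_rules hra
    exact ⟨V', R', hst, (Finset.coe_subset.2 hV').trans (hvρ a ha).2⟩
  · push Not at hcyc
    refine ⟨_, _, .mk r hr v ρ (fun a ha => (hvρ a ha).1) hcyc, ?_⟩
    simp only [Finset.coe_union, Finset.coe_biUnion, Set.union_subset_iff, Set.iUnion_subset_iff]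
    exact ⟨fun a ha => (hvρ a ha).2, hneg⟩

end Supported

section Omega

variable {I : Interp α} {c : α}

lemma supported_of_mem_psiIter_T :
    ∀ {n c}, c ∈ (PsiIter (HB P) (reduct P I) n).T → Supported P I.F c
  | 0, _, h => absurd h (Set.notMem_empty _)
  | n + 1, _, ⟨_, q, ⟨r, hr, _, hhead, hpos, hU⟩, rfl, hq, hbody⟩ => by
    rw [hhead]
    refine Supported.of_rule hr (fun a ha => supported_of_mem_psiIter_T
      (n := n) (hbody a (hpos ▸ ha))) fun b hb => ?_
    by_contra hbF
    exact hq (hU.2 ⟨b, hb, hbF⟩)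

lemma eventually_atTop_of_eventually_succ {p : ℕ → Prop} (h : ∀ᶠ n in atTop, p (n + 1)) :
    ∀ᶠ n in atTop, p n := by
  rw [← map_add_atTop_eq_nat 1]
  exact eventually_map.2 h

lemma Supported.eventually_mem_psiIter_T (hI : Disjoint I.T I.F) (h : Supported P I.F c) :
    ∀ᶠ n in atTop, c ∈ (PsiIter (HB P) (reduct P I) n).T := by
  obtain ⟨V, R, hst, hV⟩ := h
  induction hst with
  | mk r hr v ρ _ _ ih =>
    simp only [Finset.coe_union, Finset.coe_biUnion, Set.union_subset_iff,
      Set.iUnion_subset_iff] at hV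
    have hbody := (eventually_all_finset r.bodyPos).2 fun a ha => ih a ha (hV.1 a ha)
    refine eventually_atTop_of_eventually_succ (hbody.mono fun n hn => ?_)
    refine ⟨Rule.atoms_subset_HB hr (Finset.mem_insert_self _ _), ⟨r.head, r.bodyPos, _⟩,
      ⟨r, hr, fun b hb => Set.disjoint_right.1 hI (hV.2 hb), rfl, rfl, Iff.rfl⟩, rfl, ?_, hn⟩
    rintro ⟨b, hb, hbF⟩
    exact hbF (hV.2 hb)

lemma Supported.eventually_notMem_psiIter_F (h : Supported P I.Tᶜ c) :
    ∀ᶠ n in atTop, c ∉ (PsiIter (HB P) (reduct P I) n).F := by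
  obtain ⟨V, R, hst, hV⟩ := h
  induction hst with
  | mk r hr v ρ _ _ ih =>
    simp only [Finset.coe_union, Finset.coe_biUnion, Set.union_subset_iff,
      Set.iUnion_subset_iff] at hV
    have hbody := (eventually_all_finset r.bodyPos).2 fun a ha => ih a ha (hV.1 a ha)
    refine eventually_atTop_of_eventually_succ (hbody.mono fun n hn hF => ?_)
    obtain ⟨a, ha, haF⟩ :=
      hF.2 ⟨r.head, r.bodyPos, _⟩ ⟨r, hr, fun b hb => hV.2 hb, rfl, rfl, Iff.rfl⟩ rfl
    exact hn a ha haF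

lemma mem_psiIter_F_of_not_supported :
    ∀ {n c}, c ∈ HB P → ¬ Supported P I.Tᶜ c → c ∈ (PsiIter (HB P) (reduct P I) n).F
  | 0, _, hc, _ => hc
  | n + 1, _, hc, h => by
    refine ⟨hc, fun q ⟨r, hr, hneg, hhead, hpos, _⟩ hq => ?_⟩
    rw [hpos]
    by_contra! hbody
    refine h (hq ▸ hhead ▸ Supported.of_rule hr (fun a ha => ?_) hneg)
    by_contra ha'
    exact hbody a ha (mem_psiIter_F_of_not_supported
      (Rule.atoms_subset_HB hr (by simp [Rule.atoms, ha])) ha')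

lemma omegaOp_T (hI : Disjoint I.T I.F) :
    (OmegaOp (HB P) P I).T = {c | Supported P I.F c} := by
  ext c
  refine ⟨fun hc => ?_, fun hc => Set.mem_iUnion.2 (hc.eventually_mem_psiIter_T hI).exists⟩
  obtain ⟨n, hn⟩ := Set.mem_iUnion.1 hc
  exact supported_of_mem_psiIter_T hn

lemma omegaOp_F :
    (OmegaOp (HB P) P I).F = {c | c ∈ HB P ∧ ¬ Supported P I.Tᶜ c} := by
  ext c
  refine ⟨fun hc => ?_, fun hc => Set.mem_iInter.2 fun n =>
    mem_psiIter_F_of_not_supported hc.1 hc.2⟩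
  rw [OmegaOp, Set.mem_iInter] at hc
  refine ⟨hc 0, fun h => ?_⟩
  obtain ⟨n, hn⟩ := h.eventually_notMem_psiIter_F.exists
  exact hn (hc n)

lemma isPSModel_iff :
    IsPSModel (HB P) P I ↔ IsInterp (HB P) I ∧ I.T = {c | Supported P I.F c} ∧
      I.F = {c | c ∈ HB P ∧ ¬ Supported P I.Tᶜ c} := by
  refine ⟨fun ⟨hI, hΩ⟩ => ⟨hI, ?_, ?_⟩, fun ⟨hI, hT, hF⟩ => ⟨hI, ?_⟩⟩
  · rw [← omegaOp_T hI.2.2, hΩ]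
  · rw [← omegaOp_F, hΩ]
  · ext c
    · rw [omegaOp_T hI.2.2, ← hT]
    · rw [omegaOp_F, ← hF]

end Omega

lemma Lab.complete_conditions_iff {l : Lab} {S S' : Prop} (h : S → S') :
    ((l = .inn → S) ∧ (l = .out → ¬ S')) ∧ (l = .und → ¬ S ∧ S') ↔
      (l = .inn ↔ S) ∧ (l = .out ↔ ¬ S') := by
  cases l <;> simp only [reduceCtorEq, true_implies, false_implies, true_iff, false_iff] <;> tauto

section Labelling

variable {L : α → Lab} {a : α}

lemma isInterp_L2I : IsInterp (HB P) (L2I P L) := by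
  refine ⟨fun c hc => hc.1, fun c hc => hc.1, Set.disjoint_left.2 ?_⟩
  rintro c ⟨-, harg, hin⟩ (⟨-, hc | ⟨-, hout⟩⟩)
  · exact hc harg
  · exact Lab.noConfusion (hin.symm.trans hout)

lemma L2I_T : (L2I P L).T = labIn (setafOf P) L := by
  ext c
  exact ⟨fun ⟨_, hc⟩ => hc, fun hc => ⟨argsOf_subset_HB hc.1, hc⟩⟩

lemma L2I_F : (L2I P L).F = (↑(argsOf P) ∩ {b | L b ≠ .out})ᶜ ∩ HB P := by
  ext c
  simp only [L2I, Set.mem_ofPred_eq, Set.mem_inter_iff, Set.mem_compl_iff, Finset.mem_coe]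
  tauto

lemma exists_att_subset_iff (ha : a ∈ argsOf P) (X : Set α) :
    (∃ B, (setafOf P).att B a ∧ ↑B ⊆ X) ↔ ¬ Supported P (↑(argsOf P) ∩ X)ᶜ a := by
  classical
  refine ⟨fun ⟨B, ⟨hBargs, _, hhit, _⟩, hBX⟩ ⟨V, R, hst, hV⟩ => ?_, fun h => ?_⟩
  · obtain ⟨b, hbB, hbV⟩ := hhit V R hst
    exact hV hbV ⟨hBargs hbB, hBX hbB⟩
  · have hC : HitsVul P ((argsOf P).filter (· ∈ X)) a := fun V R hst => by
      by_contra! hno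
      exact h ⟨V, R, hst, fun b hb hbX => hno b (Finset.mem_filter.2 hbX) hb⟩
    obtain ⟨B, hBC, hB⟩ := exists_minimal_le_of_wellFoundedLT (HitsVul P · a) _ hC
    exact ⟨B, ⟨hBC.trans (Finset.filter_subset _ _), ha, hB.prop,
      fun _ hB' => hB.not_prop_of_lt hB'⟩, fun b hb => (Finset.mem_filter.1 (hBC hb)).2⟩

lemma exists_att_forall_inn_iff (ha : a ∈ argsOf P) :
    (∃ B, (setafOf P).att B a ∧ ∀ b ∈ B, L b = .inn) ↔ ¬ Supported P (L2I P L).Tᶜ a := by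
  rw [L2I_T]
  exact exists_att_subset_iff ha {b | L b = .inn}

lemma exists_att_forall_ne_out_iff (ha : a ∈ argsOf P) :
    (∃ B, (setafOf P).att B a ∧ ∀ b ∈ B, L b ≠ .out) ↔ ¬ Supported P (L2I P L).F a := by
  rw [L2I_F, Supported.inter_HB_iff]
  exact exists_att_subset_iff ha {b | L b ≠ .out}

lemma completeLab_setafOf_iff :
    CompleteLab (setafOf P) L ↔ ∀ a ∈ argsOf P,
      (L a = .inn ↔ Supported P (L2I P L).F a) ∧ (L a = .out ↔ ¬ Supported P (L2I P L).Tᶜ a) := by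
  rw [CompleteLab, AdmissibleLab, ← forall₂_and]
  refine forall₂_congr fun a ha => ?_
  have hin : (∀ B, (setafOf P).att B a → ∃ b ∈ B, L b = .out) ↔ Supported P (L2I P L).F a := by
    rw [← not_iff_not, ← exists_att_forall_ne_out_iff ha]
    push Not
    rfl
  have hund : (∀ B, (setafOf P).att B a → ∃ b ∈ B, L b ≠ .inn) ↔
      Supported P (L2I P L).Tᶜ a := by
    rw [← not_iff_not, ← exists_att_forall_inn_iff ha]
    push Not
    rfl
  rw [hin, exists_att_forall_inn_iff ha, exists_att_forall_ne_out_iff ha, hund]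
  exact Lab.complete_conditions_iff fun h => h.mono isInterp_L2I.2.2.subset_compl_left

lemma mem_L2I_T_iff (ha : a ∈ argsOf P) : a ∈ (L2I P L).T ↔ L a = .inn := by
  simp [L2I, ha, argsOf_subset_HB ha]

lemma mem_L2I_F_iff (ha : a ∈ argsOf P) : a ∈ (L2I P L).F ↔ L a = .out := by
  simp [L2I, ha, argsOf_subset_HB ha]

lemma isPSModel_L2I_iff :
    IsPSModel (HB P) P (L2I P L) ↔ ∀ a ∈ argsOf P,
      (L a = .inn ↔ Supported P (L2I P L).F a) ∧ (L a = .out ↔ ¬ Supported P (L2I P L).Tᶜ a) := by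
  rw [isPSModel_iff, and_iff_right isInterp_L2I, Set.ext_iff, Set.ext_iff, ← forall_and]
  refine forall_congr' fun c => ?_
  by_cases hc : c ∈ argsOf P
  · rw [mem_L2I_T_iff hc, mem_L2I_F_iff hc, Set.mem_ofPred_eq, Set.mem_ofPred_eq,
      and_iff_right (argsOf_subset_HB hc), iff_true_intro hc, true_implies]
  · have hns : ∀ X, ¬ Supported P X c := fun _ hs => hc hs.mem_argsOf
    simp only [L2I, Set.mem_ofPred_eq, hc, hns, false_and, and_false, not_false_eq_true,
      true_or, and_true, iff_self, false_implies]

lemma completeLab_setafOf_iff_isPSModel :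
    CompleteLab (setafOf P) L ↔ IsPSModel (HB P) P (L2I P L) :=
  completeLab_setafOf_iff.trans isPSModel_L2I_iff.symm

end Labelling

lemma L2I_I2L {J : Interp α} (hJ : IsPSModel (HB P) P J) : L2I P (I2L J) = J := by
  have hdisj := hJ.1.2.2
  have hinn : ∀ c, I2L J c = .inn ↔ c ∈ J.T := fun c => by
    unfold I2L
    split_ifs <;> simp_all
  have hout : ∀ c, I2L J c = .out ↔ c ∈ J.F := fun c => by
    unfold I2L
    split_ifs <;> simp_all [Set.disjoint_left]
  obtain ⟨⟨-, hFH, -⟩, hT, hF⟩ := isPSModel_iff.1 hJ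
  have hTargs : ∀ c ∈ J.T, c ∈ argsOf P := fun c hc => by
    rw [hT] at hc
    exact hc.mem_argsOf
  have hnonarg : ∀ c ∈ HB P, c ∉ argsOf P → c ∈ J.F := fun c hcH hc =>
    hF ▸ ⟨hcH, fun hs => hc hs.mem_argsOf⟩
  ext c
  · simp only [L2I, Set.mem_ofPred_eq, hinn]
    exact ⟨fun h => h.2.2, fun h => ⟨argsOf_subset_HB (hTargs c h), hTargs c h, h⟩⟩
  · simp only [L2I, Set.mem_ofPred_eq, hout]
    exact ⟨fun ⟨hcH, h⟩ => h.elim (hnonarg c hcH) And.right,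
      fun h => ⟨hFH h, (em' _).imp_right fun ha => ⟨ha, h⟩⟩⟩

end

theorem stmt5 (P : NLP α) (L : α → Lab) :
    PreferredLab (setafOf P) L ↔ IsRegularModel (HB P) P (L2I P L) := by
  simp only [PreferredLab, IsRegularModel, completeLab_setafOf_iff_isPSModel, ← L2I_T]
  refine and_congr_right fun _ => ⟨fun h J hJ => ?_, fun h L' hL' => h _ hL'⟩
  simpa only [L2I_I2L hJ] using h (I2L J) (by rwa [L2I_I2L hJ])
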